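/- Let λ be a partition of n and let P and Q be p-subgroups of the symmetric group S_n having the same orbit type on {1,…,n}. Then dim_F Y^λ(P) = dim_F Y^λ(Q), where Y^λ is the Young module labelled by λ. -/

import Mathlib

open scoped BigOperators

/-! ## Brauer construction for representations of finite groups -/

section Brauer

variable {F : Type} [Field F] {G : Type} [Group G]
variable {V : Type} [AddCommGroup V] [Module F V]

/-- The submodule of `P`-fixed points of a representation. -/
def repFixed (ρ : Representation F G V) (P : Subgroup G) : Submodule F V where
  carrier := {v | ∀ g ∈ P, ρ g v = v}
  add_mem' := by
    intro a b ha hb g hg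
    simp [map_add, ha g hg, hb g hg]
  zero_mem' := by
    intro g hg
    simp
  smul_mem' := by
    intro c v hv g hg
    simp [map_smul, hv g hg]

/-- The relative trace map `Tr_Q^P` (as a bare function, summing over a set of
left coset representatives of `Q` in `P`). -/
noncomputable def relTrace [Finite G] (ρ : Representation F G V) (P Q : Subgroup G)
    (v : V) : V := by
  classical
  have : Fintype (P ⧸ Q.subgroupOf P) := Fintype.ofFinite _
  exact ∑ x : P ⧸ Q.subgroupOf P, ρ ((Quotient.out x : ↥P) : G) v

/-- The subspace `Tr^P(M) = Σ_{Q < P} Tr_Q^P (M^Q)` (as a submodule of `V`). -/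
noncomputable def brauerTraceSub [Finite G] (ρ : Representation F G V) (P : Subgroup G) :
    Submodule F V :=
  Submodule.span F {w | ∃ Q : Subgroup G, Q < P ∧ ∃ v ∈ repFixed ρ Q, w = relTrace ρ P Q v}

/-- The dimension of the Brauer construction `M(P) = M^P / Tr^P(M)`. -/
noncomputable def brauerDim [Finite G] (ρ : Representation F G V) (P : Subgroup G) : ℕ :=
  Module.finrank F
    (↥(repFixed ρ P) ⧸ ((brauerTraceSub ρ P).comap (repFixed ρ P).subtype))

/-- `σ` is (isomorphic to) a direct summand of `ρ`: there is an equivariant split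
injection of `σ` into `ρ`. -/
def IsRepSummand {W : Type} [AddCommGroup W] [Module F W]
    (ρ : Representation F G V) (σ : Representation F G W) : Prop :=
  ∃ (ι : W →ₗ[F] V) (π : V →ₗ[F] W),
    (∀ g w, ι (σ g w) = ρ g (ι w)) ∧ (∀ g v, π (ρ g v) = σ g (π v)) ∧ ∀ w, π (ι w) = w

/-- A representation is indecomposable: nonzero, and admitting no nontrivial
decomposition into two invariant submodules. -/
def IsIndecomposableRep (ρ : Representation F G V) : Prop :=
  (∃ v : V, v ≠ 0) ∧
  ∀ A B : Submodule F V, (∀ g, ∀ v ∈ A, ρ g v ∈ A) → (∀ g, ∀ v ∈ B, ρ g v ∈ B) →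
    A ⊓ B = ⊥ → A ⊔ B = ⊤ → A = ⊥ ∨ B = ⊥

/-- Isomorphism of representations. -/
def RepIso {W : Type} [AddCommGroup W] [Module F W]
    (ρ : Representation F G V) (σ : Representation F G W) : Prop :=
  ∃ e : V ≃ₗ[F] W, ∀ g v, e (ρ g v) = σ g (e v)

end Brauer

/-! ## Compositions, partitions, tabloids and Young modules -/

section Young

/-- A composition of `n` as a finitely supported function `ℕ → ℕ` with sum `n`. -/
def IsCompositionFn (c : ℕ → ℕ) (n : ℕ) : Prop :=
  (Function.support c).Finite ∧ ∑ᶠ j, c j = n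

/-- A partition of `n` as a finitely supported weakly decreasing function `ℕ → ℕ`
with sum `n`. -/
def IsPartitionFn (c : ℕ → ℕ) (n : ℕ) : Prop :=
  IsCompositionFn c n ∧ Antitone c

/-- A `p`-restricted partition: all successive differences (including the last
part) are `< p`. -/
def IsPRestrictedFn (p : ℕ) (c : ℕ → ℕ) : Prop := ∀ j, c j - c (j + 1) < p

/-- The dominance order: `Dominates lam mu` means `lam ⊵ mu`. -/
def Dominates (lam mu : ℕ → ℕ) : Prop :=
  ∀ N, ∑ j ∈ Finset.range N, mu j ≤ ∑ j ∈ Finset.range N, lam j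

/-- Strict dominance `lam ⊳ mu`. -/
def StrictDominates (lam mu : ℕ → ℕ) : Prop := Dominates lam mu ∧ lam ≠ mu

/-- A `c`-tabloid: a tuple of pairwise disjoint subsets of `{1,…,n}` covering
everything, the `j`-th of size `c j`. -/
structure Tabloid (n : ℕ) (c : ℕ → ℕ) where
  row : ℕ → Finset (Fin n)
  disj : ∀ i j, i ≠ j → Disjoint (row i) (row j)
  card_row : ∀ j, (row j).card = c j
  cover : ∀ x, ∃ j, x ∈ row j

theorem Tabloid.ext' {n : ℕ} {c : ℕ → ℕ} {T S : Tabloid n c} (h : T.row = S.row) :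
    T = S := by
  cases T; cases S; simp_all

/-- The natural action of the symmetric group on tabloids. -/
instance {n : ℕ} {c : ℕ → ℕ} : MulAction (Equiv.Perm (Fin n)) (Tabloid n c) where
  smul σ T :=
    { row := fun j => (T.row j).image σ
      disj := fun i j h => (Finset.disjoint_image σ.injective).mpr (T.disj i j h)
      card_row := fun j => by
        rw [Finset.card_image_of_injective _ σ.injective, T.card_row]
      cover := fun x => by
        obtain ⟨j, hj⟩ := T.cover (σ⁻¹ x)
        exact ⟨j, Finset.mem_image.mpr ⟨σ⁻¹ x, hj, by simp⟩⟩ }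
  one_smul T := Tabloid.ext' (by funext j; exact Finset.image_id)
  mul_smul a b T := Tabloid.ext' (by
    funext j
    show Finset.image (⇑(a * b)) _ = Finset.image ⇑a (Finset.image ⇑b _)
    rw [Finset.image_image]
    rfl)

/-- The Young permutation module `M^c`, as the permutation representation of
`S_n` on the free `F`-module on the set of `c`-tabloids. -/
noncomputable def youngRep (F : Type) [Field F] (n : ℕ) (c : ℕ → ℕ) :
    Representation F (Equiv.Perm (Fin n)) (Tabloid n c →₀ F) where
  toFun g := Finsupp.lmapDomain F F (g • ·)
  map_one' := by ext x y; simp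
  map_mul' x y := by ext z w; simp [mul_smul]

/-- `ρ` is a Young module `Y^lam`: an indecomposable direct summand of `M^lam`
which is not a direct summand of any `M^mu` with `mu ⊳ lam`. -/
def IsYoungModuleFor (F : Type) [Field F] (n : ℕ) (lam : ℕ → ℕ)
    {V : Type} [AddCommGroup V] [Module F V]
    (ρ : Representation F (Equiv.Perm (Fin n)) V) : Prop :=
  IsIndecomposableRep ρ ∧ IsRepSummand (youngRep F n lam) ρ ∧
  ∀ mu : ℕ → ℕ, IsPartitionFn mu n → StrictDominates mu lam →
    ¬ IsRepSummand (youngRep F n mu) ρ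

end Young

/-! ## Orbit types, Young subgroups and related combinatorics -/

section Orbits

/-- The orbit type of a subgroup `P ≤ S_n`: the multiset of cardinalities of
the orbits of `P` on `{1,…,n}`. -/
noncomputable def orbitType (n : ℕ) (P : Subgroup (Equiv.Perm (Fin n))) : Multiset ℕ := by
  classical
  exact (Finset.univ.image fun x : Fin n => MulAction.orbit P x).val.map fun s => s.ncard

/-- The multiset of (nonempty) fiber sizes of a labelling `f : {1,…,n} → ℕ`;
the fibers of `f` are the blocks of a set partition of `{1,…,n}`. -/
noncomputable def fiberSizes {n : ℕ} (f : Fin n → ℕ) : Multiset ℕ := by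
  classical
  exact (Finset.univ.image f).val.map fun j => (Finset.univ.filter fun x => f x = j).card

/-- The subgroup of permutations preserving each fiber (block) of the
labelling `f`; for an interval labelling this is a Young subgroup. -/
def blockStabilizer (n : ℕ) (f : Fin n → ℕ) : Subgroup (Equiv.Perm (Fin n)) where
  carrier := {σ | ∀ x, f (σ x) = f x}
  one_mem' := fun _ => rfl
  mul_mem' := by
    intro a b ha hb x
    rw [Equiv.Perm.mul_apply, ha, hb]
  inv_mem' := by
    intro a ha x
    simpa using (ha (a⁻¹ x)).symm

/-- `P` is a Sylow `p`-subgroup of the subgroup `H`. -/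
def IsSylowPSubgroupIn {G : Type} [Group G] (p : ℕ) (P H : Subgroup G) : Prop :=
  P ≤ H ∧ IsPGroup p P ∧ ∀ Q : Subgroup G, IsPGroup p Q → Q ≤ H → P ≤ Q → Q = P

/-- Every member of `O` is a power of `p`. -/
def IsPPowerMultiset (p : ℕ) (O : Multiset ℕ) : Prop := ∀ x ∈ O, ∃ i : ℕ, x = p ^ i

/-- `lamE 0, …, lamE s` is the `p`-adic expansion of the partition `lam`:
each `lamE i` is a `p`-restricted partition and `lam = Σ_i p^i • lamE i`. -/
def IsPAdicExpansionOf (p : ℕ) (lam : ℕ → ℕ) (s : ℕ) (lamE : ℕ → ℕ → ℕ) : Prop :=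
  (∀ i, i ≤ s →
    (Function.support (lamE i)).Finite ∧ Antitone (lamE i) ∧ IsPRestrictedFn p (lamE i)) ∧
  ∀ j, lam j = ∑ i ∈ Finset.range (s + 1), p ^ i * lamE i j

/-- The multiset `O_lam = (1^{|lam(0)|}, p^{|lam(1)|}, …, (p^s)^{|lam(s)|})`
attached to a `p`-adic expansion. -/
noncomputable def pAdicOrbitMultiset (p s : ℕ) (lamE : ℕ → ℕ → ℕ) : Multiset ℕ :=
  ∑ i ∈ Finset.range (s + 1), Multiset.replicate (∑ᶠ j, lamE i j) (p ^ i)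

/-- `O` is a rearrangement of a refinement of `O'`: `O` is a disjoint union of
submultisets, one summing to each element of `O'`. -/
def IsRefinementRearrangement (O O' : Multiset ℕ) : Prop :=
  ∃ C : Multiset (Multiset ℕ), C.map Multiset.sum = O' ∧ C.sum = O

/-- `P` is conjugate to a subgroup of `Q`. -/
def IsConjSubgroup {G : Type} [Group G] (P Q : Subgroup G) : Prop :=
  ∃ g : G, ∀ x ∈ P, g * x * g⁻¹ ∈ Q

/-- An elementary abelian `p`-subgroup. -/
def IsElementaryAbelian (p : ℕ) {G : Type} [Group G] (E : Subgroup G) : Prop :=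
  (∀ x ∈ E, x ^ p = 1) ∧ ∀ x ∈ E, ∀ y ∈ E, x * y = y * x

/-- Every row of the tabloid `T` is a union of fibers (blocks) of `f`. -/
def rowsUnionOfFibers {n : ℕ} {c : ℕ → ℕ} (f : Fin n → ℕ) (T : Tabloid n c) : Prop :=
  ∀ j x y, f x = f y → x ∈ T.row j → y ∈ T.row j

/-- The number `m_{c,O}`: the number of `c`-tabloids each of whose rows is a
union of blocks of the set partition with labelling `f`. -/
noncomputable def mNumber (n : ℕ) (c : ℕ → ℕ) (f : Fin n → ℕ) : ℕ :=
  Nat.card {T : Tabloid n c // rowsUnionOfFibers f T}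

end Orbits

/-! ## Generic Jordan types -/

section Jordan

/-- The nilpotent Jordan block of size `p` over `K`, as an endomorphism of `K^p`. -/
def jordanShift (p : ℕ) (K : Type) [Field K] : (Fin p → K) →ₗ[K] (Fin p → K) where
  toFun v := fun i => if h : i.val + 1 < p then v ⟨i.val + 1, h⟩ else 0
  map_add' x y := by
    funext i
    by_cases h : (i : ℕ) + 1 < p <;> simp [h]
  map_smul' c x := by
    funext i
    by_cases h : (i : ℕ) + 1 < p <;> simp [h]

/-- The rational function field `F(α_1, …, α_k)`. -/
abbrev RatFuncField (F : Type) [Field F] (k : ℕ) : Type :=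
  FractionRing (MvPolynomial (Fin k) F)

/-- The operator `u_α − 1 = Σ_i α_i (ρ(g_i) − 1)` on `K ⊗_F V`, where
`K = F(α_1,…,α_k)`. -/
noncomputable def uAlphaSubOne {F : Type} [Field F] {G : Type} [Group G]
    {V : Type} [AddCommGroup V] [Module F V]
    (ρ : Representation F G V) (k : ℕ) (g : Fin k → G) :
    TensorProduct F (RatFuncField F k) V →ₗ[RatFuncField F k]
      TensorProduct F (RatFuncField F k) V :=
  ∑ i : Fin k,
    (algebraMap (MvPolynomial (Fin k) F) (RatFuncField F k) (MvPolynomial.X i)) •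
      LinearMap.baseChange (RatFuncField F k) (ρ (g i) - LinearMap.id)

end Jordan

/-
Let `e = ι ∘ π` be the equivariant idempotent of the permutation module `M = F[X]` on
`λ`-tabloids that cuts out `Y^λ`. For a `p`-subgroup `P`, a `P`-fixed vector of `M` lies in the
trace subspace `Σ_{R < P} Tr_R^P(M^R)` exactly when it vanishes on the set `X^P` of `P`-fixed
tabloids: relative traces from proper subgroups vanish there because the index is divisible by
`p`, while the orbit sum of a non-fixed tabloid `x` is the relative trace from its stabiliser.
Hence `Y^λ(P)` is isomorphic to the image of the compression of `e` to `F[X^P]`. If `P` and `Q`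
have the same orbit type, some permutation `g` carries the `P`-orbits onto the `Q`-orbits, so
`g • X^P = X^Q`, and since `e` commutes with `g` the two compressions have the same rank.
-/

open scoped Pointwise

theorem LinearMap.finrank_range_eq_of_comp_equiv {F M : Type*} [Field F] [AddCommGroup M]
    [Module F M] {A B : M →ₗ[F] M} (E : M ≃ₗ[F] M) (h : B ∘ₗ E = E ∘ₗ A) :
    Module.finrank F (LinearMap.range B) = Module.finrank F (LinearMap.range A) := by
  rw [← LinearMap.range_comp_of_range_eq_top B E.range, h, LinearMap.range_comp,
    LinearEquiv.finrank_map_eq]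

section PermRep

variable (F : Type) [Field F] (G : Type) [Group G] (X : Type) [MulAction G X]

noncomputable def permRep : Representation F G (X →₀ F) where
  toFun g := Finsupp.lmapDomain F F (g • ·)
  map_one' := by ext x y; simp
  map_mul' x y := by ext z w; simp [mul_smul]

variable {F G X}

theorem permRep_apply_apply (g : G) (m : X →₀ F) (x : X) :
    permRep F G X g m x = m (g⁻¹ • x) := by
  conv_lhs => rw [← smul_inv_smul g x]
  exact Finsupp.mapDomain_apply (MulAction.injective g) m _

theorem permRep_single (g : G) (x : X) (a : F) :
    permRep F G X g (Finsupp.single x a) = Finsupp.single (g • x) a :=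
  Finsupp.mapDomain_single

open scoped Classical in
noncomputable def restrictTo (S : Set X) : (X →₀ F) →ₗ[F] (X →₀ F) where
  toFun m := m.filter (· ∈ S)
  map_add' _ _ := Finsupp.filter_add
  map_smul' _ _ := Finsupp.filter_smul

open scoped Classical in
theorem restrictTo_apply (S : Set X) (m : X →₀ F) (x : X) :
    restrictTo S m x = if x ∈ S then m x else 0 :=
  Finsupp.filter_apply _ _ _

theorem restrictTo_restrictTo (S : Set X) (m : X →₀ F) :
    restrictTo S (restrictTo S m) = restrictTo S m := by
  ext x
  simp only [restrictTo_apply]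
  split_ifs <;> rfl

theorem restrictTo_smul_permRep (S : Set X) (g : G) (m : X →₀ F) :
    restrictTo (g • S) (permRep F G X g m) = permRep F G X g (restrictTo S m) := by
  classical
  ext x
  simp only [restrictTo_apply, permRep_apply_apply]
  exact if_congr Set.mem_smul_set_iff_inv_smul_mem rfl rfl

theorem restrictTo_fixedPoints_mem_repFixed (P : Subgroup G) (m : X →₀ F) :
    restrictTo (MulAction.fixedPoints P X) m ∈ repFixed (permRep F G X) P := by
  intro g hg
  ext x
  have hgx : ∀ y ∈ MulAction.fixedPoints P X, g • y = y := fun y hy => hy ⟨g, hg⟩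
  rw [permRep_apply_apply, restrictTo_apply, restrictTo_apply]
  by_cases hx : x ∈ MulAction.fixedPoints P X
  · rw [inv_smul_eq_iff.mpr (hgx x hx).symm]
  · have hx' : g⁻¹ • x ∉ MulAction.fixedPoints P X := fun h => by
      rw [← smul_inv_smul g x, hgx _ h] at hx
      exact hx h
    rw [if_neg hx, if_neg hx']

theorem apply_eq_of_mem_orbit {P : Subgroup G} {m : X →₀ F}
    (hm : m ∈ repFixed (permRep F G X) P) {x y : X} (hy : y ∈ MulAction.orbit P x) :
    m y = m x := by
  obtain ⟨σ, rfl⟩ := hy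
  show m ((σ : G) • x) = m x
  conv_lhs => rw [← hm σ σ.2]
  rw [permRep_apply_apply, inv_smul_smul]

theorem finrank_range_restrictTo_smul (S : Set X) (g : G) (e : (X →₀ F) →ₗ[F] (X →₀ F))
    (he : ∀ m, e (permRep F G X g m) = permRep F G X g (e m)) :
    Module.finrank F (LinearMap.range (restrictTo (g • S) ∘ₗ e ∘ₗ restrictTo (g • S))) =
      Module.finrank F (LinearMap.range (restrictTo S ∘ₗ e ∘ₗ restrictTo S)) := by
  let E : (X →₀ F) ≃ₗ[F] (X →₀ F) :=
    { permRep F G X g with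
      invFun := permRep F G X g⁻¹
      left_inv := (permRep F G X).inv_self_apply g
      right_inv := (permRep F G X).self_inv_apply g }
  refine LinearMap.finrank_range_eq_of_comp_equiv E (LinearMap.ext fun m => ?_)
  change restrictTo (g • S) (e (restrictTo (g • S) (permRep F G X g m))) =
    permRep F G X g (restrictTo S (e (restrictTo S m)))
  rw [restrictTo_smul_permRep, he, restrictTo_smul_permRep]

end PermRep

theorem youngRep_eq_permRep (F : Type) [Field F] (n : ℕ) (c : ℕ → ℕ) :
    youngRep F n c = permRep F (Equiv.Perm (Fin n)) (Tabloid n c) := rfl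

section Equivariant

variable {F : Type} [Field F] {G : Type} [Group G]
variable {V W : Type} [AddCommGroup V] [Module F V] [AddCommGroup W] [Module F W]
variable {ρ : Representation F G V} {σ : Representation F G W} {f : V →ₗ[F] W}

theorem map_mem_repFixed (hf : ∀ g v, f (ρ g v) = σ g (f v)) {P : Subgroup G} {v : V}
    (hv : v ∈ repFixed ρ P) : f v ∈ repFixed σ P := fun g hg => by
  rw [← hf, hv g hg]

variable [Finite G]

theorem relTrace_eq_sum (ρ : Representation F G V) (P Q : Subgroup G)
    [Fintype (P ⧸ Q.subgroupOf P)] (v : V) :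
    relTrace ρ P Q v = ∑ x : P ⧸ Q.subgroupOf P, ρ ((Quotient.out x : P) : G) v := by
  unfold relTrace
  congr!

theorem map_relTrace (hf : ∀ g v, f (ρ g v) = σ g (f v)) (P Q : Subgroup G) (v : V) :
    f (relTrace ρ P Q v) = relTrace σ P Q (f v) := by
  classical
  have : Fintype (P ⧸ Q.subgroupOf P) := Fintype.ofFinite _
  simp only [relTrace_eq_sum, map_sum, hf]

theorem brauerTraceSub_le_comap (hf : ∀ g v, f (ρ g v) = σ g (f v)) (P : Subgroup G) :
    brauerTraceSub ρ P ≤ (brauerTraceSub σ P).comap f := by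
  refine Submodule.span_le.mpr ?_
  rintro _ ⟨Q, hQ, u, hu, rfl⟩
  exact Submodule.subset_span ⟨Q, hQ, f u, map_mem_repFixed hf hu, map_relTrace hf P Q u⟩

theorem mem_brauerTraceSub_iff_of_leftInverse {π : W →ₗ[F] V}
    (hf : ∀ g v, f (ρ g v) = σ g (f v)) (hπ : ∀ g w, π (σ g w) = ρ g (π w))
    (hπf : ∀ v, π (f v) = v) {P : Subgroup G} {v : V} :
    v ∈ brauerTraceSub ρ P ↔ f v ∈ brauerTraceSub σ P :=
  ⟨(brauerTraceSub_le_comap hf P ·), fun h => hπf v ▸ brauerTraceSub_le_comap hπ P h⟩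

end Equivariant

theorem IsPGroup.dvd_index_subgroupOf {G : Type*} [Group G] [Finite G] {p : ℕ} [Fact p.Prime]
    {P Q : Subgroup G} (hP : IsPGroup p P) (hQ : Q < P) : p ∣ (Q.subgroupOf P).index := by
  obtain ⟨k, hk⟩ := hP.index (Q.subgroupOf P)
  have hne : (Q.subgroupOf P).index ≠ 1 := by
    rw [Ne, Subgroup.index_eq_one, Subgroup.subgroupOf_eq_top]
    exact hQ.not_ge
  rcases k with _ | k
  · exact absurd hk hne
  · exact hk ▸ dvd_pow_self p k.succ_ne_zero

section PermRepBrauer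

variable {F : Type} [Field F] {G : Type} [Group G] [Finite G] {X : Type} [MulAction G X]

theorem relTrace_permRep_apply_of_mem_fixedPoints (P Q : Subgroup G) (m : X →₀ F) {y : X}
    (hy : y ∈ MulAction.fixedPoints P X) :
    relTrace (permRep F G X) P Q m y = (Q.subgroupOf P).index • m y := by
  classical
  have : Fintype (P ⧸ Q.subgroupOf P) := Fintype.ofFinite _
  rw [relTrace_eq_sum, Finsupp.finsetSum_apply, Subgroup.index_eq_card, Nat.card_eq_fintype_card, ← Finset.card_univ,
    ← Finset.sum_const]
  refine Finset.sum_congr rfl fun c _ => ?_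
  rw [permRep_apply_apply, ← Subgroup.coe_inv]
  exact congrArg m (hy _)

theorem restrictTo_fixedPoints_relTrace {p : ℕ} [Fact p.Prime] [CharP F p] {P Q : Subgroup G}
    (hP : IsPGroup p P) (hQ : Q < P) (m : X →₀ F) :
    restrictTo (MulAction.fixedPoints P X) (relTrace (permRep F G X) P Q m) = 0 := by
  ext y
  rw [restrictTo_apply, Finsupp.zero_apply]
  split_ifs with hy
  · rw [relTrace_permRep_apply_of_mem_fixedPoints P Q m hy, nsmul_eq_mul,
      (CharP.cast_eq_zero_iff F p _).mpr (hP.dvd_index_subgroupOf hQ), zero_mul]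
  · rfl

theorem brauerTraceSub_le_ker_restrictTo {p : ℕ} [Fact p.Prime] [CharP F p] {P : Subgroup G}
    (hP : IsPGroup p P) :
    brauerTraceSub (permRep F G X) P ≤ LinearMap.ker (restrictTo (MulAction.fixedPoints P X)) := by
  refine Submodule.span_le.mpr ?_
  rintro _ ⟨Q, hQ, v, -, rfl⟩
  exact restrictTo_fixedPoints_relTrace hP hQ v

open scoped Classical in
theorem relTrace_permRep_stabilizer_single (P : Subgroup G) (x : X) (a : F) (y : X) :
    relTrace (permRep F G X) P (MulAction.stabilizer G x ⊓ P) (Finsupp.single x a) y =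
      if y ∈ MulAction.orbit P x then a else 0 := by
  classical
  have : Fintype (P ⧸ (MulAction.stabilizer G x ⊓ P).subgroupOf P) := Fintype.ofFinite _
  have hmem : ∀ σ : P, σ ∈ (MulAction.stabilizer G x ⊓ P).subgroupOf P ↔ σ • x = x := fun σ => by
    simp [Subgroup.mem_subgroupOf, MulAction.mem_stabilizer_iff, Subgroup.smul_def]
  simp only [relTrace_eq_sum, Finsupp.finsetSum_apply, permRep_single, Finsupp.single_apply]
  split_ifs with hy
  · obtain ⟨σ, rfl⟩ := hy
    have key : ∀ c : P ⧸ (MulAction.stabilizer G x ⊓ P).subgroupOf P,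
        ((c.out : P) : G) • x = σ • x ↔ c = σ := fun c => by
      conv_rhs => rw [← QuotientGroup.out_eq' c]
      rw [QuotientGroup.eq, hmem, mul_smul, inv_smul_eq_iff, eq_comm, Subgroup.smul_def,
        Subgroup.smul_def]
    simp only [key, Finset.sum_ite_eq', Finset.mem_univ, if_true]
  · refine Finset.sum_eq_zero fun c _ => if_neg fun h => hy ⟨c.out, h⟩

open scoped Classical in
theorem eq_sum_relTrace_of_mem_repFixed {P : Subgroup G} {m : X →₀ F}
    (hm : m ∈ repFixed (permRep F G X) P) :
    m = ∑ o ∈ m.support.image (Quotient.mk (MulAction.orbitRel P X)),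
      relTrace (permRep F G X) P (MulAction.stabilizer G o.out ⊓ P)
        (Finsupp.single o.out (m o.out)) := by
  ext y
  have horbit : ∀ o : MulAction.orbitRel.Quotient P X,
      y ∈ MulAction.orbit P o.out ↔ Quotient.mk _ y = o := fun o => by
    conv_rhs => rw [← Quotient.out_eq o]
    rw [Quotient.eq, MulAction.orbitRel_apply]
  have hout : m (Quotient.mk (MulAction.orbitRel P X) y).out = m y :=
    apply_eq_of_mem_orbit hm (Quotient.mk_out (s := MulAction.orbitRel P X) y)
  simp only [Finsupp.finsetSum_apply, relTrace_permRep_stabilizer_single, horbit,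
    Finset.sum_ite_eq, hout]
  split_ifs with h
  · rfl
  · by_contra hne
    exact h (Finset.mem_image_of_mem _ (Finsupp.mem_support_iff.mpr hne))

theorem mem_brauerTraceSub_of_restrictTo_eq_zero {P : Subgroup G} {m : X →₀ F}
    (hm : m ∈ repFixed (permRep F G X) P)
    (h0 : restrictTo (MulAction.fixedPoints P X) m = 0) :
    m ∈ brauerTraceSub (permRep F G X) P := by
  classical
  rw [eq_sum_relTrace_of_mem_repFixed hm]
  refine Submodule.sum_mem _ fun o ho => Submodule.subset_span ?_
  obtain ⟨z, hz, rfl⟩ := Finset.mem_image.mp ho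
  set x := (Quotient.mk (MulAction.orbitRel P X) z).out
  have hmx : m x ≠ 0 := by
    rw [apply_eq_of_mem_orbit hm (Quotient.mk_out (s := MulAction.orbitRel P X) z)]
    exact Finsupp.mem_support_iff.mp hz
  have hx : x ∉ MulAction.fixedPoints P X := fun hx => hmx <| by
    simpa [restrictTo_apply, hx] using DFunLike.congr_fun h0 x
  refine ⟨MulAction.stabilizer G x ⊓ P, inf_le_right.lt_of_ne fun hP => hx fun σ => ?_,
    Finsupp.single x (m x), fun g hg => ?_, rfl⟩
  · exact (inf_eq_right.mp hP σ.2 : _)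
  · rw [permRep_single, MulAction.mem_stabilizer_iff.mp (Subgroup.mem_inf.mp hg).1]

theorem mem_brauerTraceSub_permRep_iff {p : ℕ} [Fact p.Prime] [CharP F p] {P : Subgroup G}
    (hP : IsPGroup p P) {m : X →₀ F} (hm : m ∈ repFixed (permRep F G X) P) :
    m ∈ brauerTraceSub (permRep F G X) P ↔ restrictTo (MulAction.fixedPoints P X) m = 0 :=
  ⟨(brauerTraceSub_le_ker_restrictTo hP ·), mem_brauerTraceSub_of_restrictTo_eq_zero hm⟩

variable {V : Type} [AddCommGroup V] [Module F V]

theorem brauerDim_eq_finrank_range_restrictTo {p : ℕ} [Fact p.Prime] [CharP F p]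
    (ρ : Representation F G V) {P : Subgroup G} (hP : IsPGroup p P)
    (ι : V →ₗ[F] (X →₀ F)) (π : (X →₀ F) →ₗ[F] V)
    (hι : ∀ g v, ι (ρ g v) = permRep F G X g (ι v))
    (hπ : ∀ g m, π (permRep F G X g m) = ρ g (π m)) (hπι : ∀ v, π (ι v) = v) :
    brauerDim ρ P = Module.finrank F (LinearMap.range
      (restrictTo (MulAction.fixedPoints P X) ∘ₗ (ι ∘ₗ π) ∘ₗ
        restrictTo (MulAction.fixedPoints P X))) := by
  set r : (X →₀ F) →ₗ[F] (X →₀ F) := restrictTo (MulAction.fixedPoints P X)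
  let Ψ : repFixed ρ P →ₗ[F] (X →₀ F) := r ∘ₗ ι ∘ₗ (repFixed ρ P).subtype
  have hιP {v : V} (hv : v ∈ repFixed ρ P) : ι v ∈ repFixed (permRep F G X) P :=
    map_mem_repFixed hι hv
  have hker : LinearMap.ker Ψ = (brauerTraceSub ρ P).comap (repFixed ρ P).subtype := by
    ext v
    rw [Submodule.mem_comap, Submodule.subtype_apply,
      mem_brauerTraceSub_iff_of_leftInverse hι hπ hπι,
      mem_brauerTraceSub_permRep_iff hP (hιP v.2)]
    rfl
  -- `r m - m` is a fixed vector vanishing on `X^P`, hence a trace, and `ι ∘ π` preserves traces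
  have hr : ∀ m ∈ repFixed (permRep F G X) P, r (ι (π (r m))) = r (ι (π m)) := fun m hm => by
    have hsub : r m - m ∈ brauerTraceSub (permRep F G X) P :=
      mem_brauerTraceSub_of_restrictTo_eq_zero
        (sub_mem (restrictTo_fixedPoints_mem_repFixed P m) hm)
        (by rw [map_sub, restrictTo_restrictTo, sub_self])
    have := brauerTraceSub_le_ker_restrictTo hP
      (brauerTraceSub_le_comap hι P (brauerTraceSub_le_comap hπ P hsub))
    rwa [LinearMap.mem_ker, map_sub, map_sub, map_sub, sub_eq_zero] at this
  have hrange : LinearMap.range Ψ = LinearMap.range (r ∘ₗ (ι ∘ₗ π) ∘ₗ r) := by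
    apply le_antisymm
    · rintro _ ⟨v, rfl⟩
      refine ⟨ι v, ?_⟩
      simp only [LinearMap.comp_apply, Ψ, Submodule.subtype_apply]
      rw [hr _ (hιP v.2), hπι]
    · rintro _ ⟨m, rfl⟩
      exact ⟨⟨π (r m), map_mem_repFixed hπ (restrictTo_fixedPoints_mem_repFixed P m)⟩, rfl⟩
  rw [brauerDim, ← hker, ← hrange]
  exact (LinearMap.quotKerEquivRange Ψ).finrank_eq

end PermRepBrauer

theorem Fintype.exists_equiv_comp_eq_of_map_univ_eq {α β γ : Type*} [Fintype α] [Fintype β]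
    [DecidableEq γ] (f : α → γ) (f' : β → γ)
    (h : Finset.univ.val.map f = Finset.univ.val.map f') :
    ∃ e : α ≃ β, ∀ a, f' (e a) = f a := by
  classical
  have hfiber : ∀ k, Fintype.card {a // f a = k} = Fintype.card {b // f' b = k} := by
    intro k
    have hk := congrArg (Multiset.count k) h
    simp only [Multiset.count_map] at hk
    simpa [Fintype.card_subtype, Finset.card, Finset.filter_val, eq_comm] using hk
  let e := (Equiv.sigmaFiberEquiv f).symm.trans
    ((Equiv.sigmaCongrRight fun k => Fintype.equivOfCardEq (hfiber k)).trans
      (Equiv.sigmaFiberEquiv f'))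
  exact ⟨e, fun a => (Fintype.equivOfCardEq (hfiber (f a)) ⟨a, rfl⟩).2⟩

theorem exists_equiv_eq_iff_of_map_card_filter_eq {X Y α β : Type*} [Fintype X] [Fintype Y]
    [DecidableEq α] [DecidableEq β] (u : X → α) (v : Y → β)
    (h : (Finset.univ.image u).val.map (fun a => (Finset.univ.filter (u · = a)).card) =
      (Finset.univ.image v).val.map (fun b => (Finset.univ.filter (v · = b)).card)) :
    ∃ g : X ≃ Y, ∀ x x', u x = u x' ↔ v (g x) = v (g x') := by
  classical
  let u' : X → Finset.univ.image u := fun x => ⟨u x, Finset.mem_image_of_mem u (Finset.mem_univ x)⟩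
  let v' : Y → Finset.univ.image v := fun y => ⟨v y, Finset.mem_image_of_mem v (Finset.mem_univ y)⟩
  have hcard : Finset.univ.val.map (fun a => Fintype.card {x // u' x = a}) =
      Finset.univ.val.map (fun b => Fintype.card {y // v' y = b}) := by
    simp only [Fintype.card_subtype, u', v', Subtype.ext_iff, Finset.univ_eq_attach,
      Finset.attach_val]
    convert h using 1
    · exact Multiset.attach_map_val' _ fun a => (Finset.univ.filter (u · = a)).card
    · exact Multiset.attach_map_val' _ fun b => (Finset.univ.filter (v · = b)).card
  obtain ⟨e, he⟩ := Fintype.exists_equiv_comp_eq_of_map_univ_eq _ _ hcard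
  let g := (Equiv.sigmaFiberEquiv u').symm.trans
    ((Equiv.sigmaCongr e fun a => Fintype.equivOfCardEq (he a).symm).trans
      (Equiv.sigmaFiberEquiv v'))
  have hg : ∀ x, v' (g x) = e (u' x) := fun x =>
    (Fintype.equivOfCardEq (he (u' x)).symm ⟨x, rfl⟩).2
  refine ⟨g, fun x x' => ?_⟩
  have hu : u x = u x' ↔ u' x = u' x' := (Subtype.ext_iff (a1 := u' x) (a2 := u' x')).symm
  have hv : v (g x) = v (g x') ↔ v' (g x) = v' (g x') :=
    (Subtype.ext_iff (a1 := v' (g x)) (a2 := v' (g x'))).symm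
  rw [hu, hv, hg, hg, e.apply_eq_iff_eq]

theorem orbitType_eq_map_card_filter (n : ℕ) (P : Subgroup (Equiv.Perm (Fin n)))
    [DecidableEq (Set (Fin n))] :
    orbitType n P = (Finset.univ.image fun x : Fin n => MulAction.orbit P x).val.map
      fun a => (Finset.univ.filter (MulAction.orbit P · = a)).card := by
  classical
  calc orbitType n P
      = (Finset.univ.image fun x : Fin n => MulAction.orbit P x).val.map Set.ncard := by
        unfold orbitType; congr!
    _ = _ := by
      refine Multiset.map_congr rfl fun a ha => ?_
      obtain ⟨z, -, rfl⟩ := Finset.mem_image.mp (Finset.mem_def.mpr ha)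
      rw [Set.ncard_eq_toFinset_card']
      congr 1
      ext x
      simp [MulAction.orbit_eq_iff]

theorem exists_perm_orbit_eq_iff {n : ℕ} {P Q : Subgroup (Equiv.Perm (Fin n))}
    (horb : orbitType n P = orbitType n Q) :
    ∃ g : Equiv.Perm (Fin n), ∀ x y,
      MulAction.orbit P x = MulAction.orbit P y ↔
        MulAction.orbit Q (g x) = MulAction.orbit Q (g y) := by
  classical
  rw [orbitType_eq_map_card_filter, orbitType_eq_map_card_filter] at horb
  exact exists_equiv_eq_iff_of_map_card_filter_eq _ _ horb

namespace Tabloid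

variable {n : ℕ} {c : ℕ → ℕ}

theorem smul_row (σ : Equiv.Perm (Fin n)) (T : Tabloid n c) (j : ℕ) :
    (σ • T).row j = (T.row j).image σ := rfl

theorem mem_fixedPoints_iff {P : Subgroup (Equiv.Perm (Fin n))} {T : Tabloid n c} :
    T ∈ MulAction.fixedPoints P (Tabloid n c) ↔
      ∀ j x y, MulAction.orbit P x = MulAction.orbit P y → x ∈ T.row j → y ∈ T.row j := by
  rw [MulAction.mem_fixedPoints]
  constructor
  · intro hT j x y hxy hx
    obtain ⟨σ, rfl⟩ := MulAction.orbit_eq_iff.mp hxy.symm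
    rw [← hT σ, Subgroup.smul_def, smul_row]
    exact Finset.mem_image_of_mem _ hx
  · intro hT σ
    refine Tabloid.ext' (funext fun j => Finset.eq_of_subset_of_card_le ?_ ?_)
    · intro y hy
      rw [Subgroup.smul_def, smul_row] at hy
      obtain ⟨x, hx, rfl⟩ := Finset.mem_image.mp hy
      exact hT j x _ (MulAction.orbit_smul σ x).symm hx
    · rw [Subgroup.smul_def, smul_row, Finset.card_image_of_injective _ (Equiv.injective _)]

theorem fixedPoints_eq_smul {P Q : Subgroup (Equiv.Perm (Fin n))} {g : Equiv.Perm (Fin n)}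
    (hg : ∀ x y, MulAction.orbit P x = MulAction.orbit P y ↔
      MulAction.orbit Q (g x) = MulAction.orbit Q (g y)) :
    MulAction.fixedPoints Q (Tabloid n c) = g • MulAction.fixedPoints P (Tabloid n c) := by
  ext T
  obtain ⟨S, rfl⟩ : ∃ S, T = g • S := ⟨g⁻¹ • T, (smul_inv_smul g T).symm⟩
  rw [Set.smul_mem_smul_set_iff, mem_fixedPoints_iff, mem_fixedPoints_iff]
  refine forall_congr' fun j => (Equiv.forall₂_congr g g ?_).symm
  intro x y
  rw [hg, smul_row, g.injective.mem_finset_image, g.injective.mem_finset_image]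

end Tabloid

theorem stmt_1_general (p : ℕ) [Fact p.Prime] (F : Type) [Field F] [CharP F p]
    (n : ℕ) (lam : ℕ → ℕ)
    (V : Type) [AddCommGroup V] [Module F V]
    (ρ : Representation F (Equiv.Perm (Fin n)) V)
    (hY : IsYoungModuleFor F n lam ρ)
    (P Q : Subgroup (Equiv.Perm (Fin n)))
    (hP : IsPGroup p P) (hQ : IsPGroup p Q)
    (horb : orbitType n P = orbitType n Q) :
    brauerDim ρ P = brauerDim ρ Q := by
  obtain ⟨-, ⟨ι, π, hι, hπ, hπι⟩, -⟩ := hY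
  rw [youngRep_eq_permRep] at hι hπ
  obtain ⟨g, hg⟩ := exists_perm_orbit_eq_iff horb
  rw [brauerDim_eq_finrank_range_restrictTo ρ hP ι π hι hπ hπι,
    brauerDim_eq_finrank_range_restrictTo ρ hQ ι π hι hπ hπι, Tabloid.fixedPoints_eq_smul hg,
    finrank_range_restrictTo_smul]
  exact fun m => (congrArg ι (hπ g m)).trans (hι g (π m))

/-- the dimension of the Brauer construction of a Young module
only depends on the orbit type of the `p`-subgroup. -/
theorem stmt_1 (p : ℕ) [Fact p.Prime] (F : Type) [Field F] [IsAlgClosed F] [CharP F p]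
    (n : ℕ) (lam : ℕ → ℕ) (hlam : IsPartitionFn lam n)
    (V : Type) [AddCommGroup V] [Module F V]
    (ρ : Representation F (Equiv.Perm (Fin n)) V)
    (hY : IsYoungModuleFor F n lam ρ)
    (P Q : Subgroup (Equiv.Perm (Fin n)))
    (hP : IsPGroup p P) (hQ : IsPGroup p Q)
    (horb : orbitType n P = orbitType n Q) :
    brauerDim ρ P = brauerDim ρ Q :=
  stmt_1_general p F n lam V ρ hY P Q hP hQ horb
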